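/- arXiv:2008.13689 — 2 statements merged into one kernel-verified Lean document; each statement's English description precedes it below -/
import Mathlib

section
/- Let {σ_j: A⁺ → B_j⁺}_{j∈J} be a family of morphisms such that for every fixed a ∈ A, ℓ_a := |σ_j(a)| is constant over j ∈ J, and let ℓ = Σ_{a∈A} ℓ_a. Let u, v ∈ A⁺ be words with |u| ≥ ℓ which start with different letters, and assume σ_j(u) is a prefix of σ_j(v) for every j ∈ J. Then there exist a letter-onto morphism q: A⁺ → C⁺ with #C < #A and morphisms p_j: C⁺ → B_j⁺ (j ∈ J) such that σ_j = p_j ∘ q for every j ∈ J, and for every fixed c ∈ C the length |p_j(c)| is constant over j ∈ J. -/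
namespace SAdicPaper

/-- A morphism between the free semigroups `A⁺ → B⁺`, determined by the (nonempty)
images of the letters. -/
structure Morphism (A : Type*) (B : Type*) where
  toFun : A → List B
  ne : ∀ a, toFun a ≠ []

namespace Morphism

universe u v

variable {A B C : Type*}

/-- The image of a word under a morphism. -/
def word (τ : Morphism A B) : List A → List B
  | [] => []
  | a :: w => τ.toFun a ++ τ.word w

theorem word_ne (τ : Morphism A B) {w : List A} (hw : w ≠ []) : τ.word w ≠ [] := by
  cases w with
  | nil => exact absurd rfl hw
  | cons a w =>
    simp only [word]
    intro h
    exact τ.ne a (List.append_eq_nil_iff.mp h).1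

/-- The identity morphism. -/
protected def id (A : Type*) : Morphism A A :=
  ⟨fun a => [a], fun a => by simp⟩

/-- Composition of morphisms. -/
def comp (τ : Morphism B C) (σ : Morphism A B) : Morphism A C :=
  ⟨fun a => τ.word (σ.toFun a), fun a => τ.word_ne (σ.ne a)⟩

/-- `|τ|₁ = ∑_{a ∈ A} |τ(a)|`. -/
def len1 (τ : Morphism A B) [Fintype A] : ℕ := ∑ a, (τ.toFun a).length

/-- `τ` is `r`-proper: there are words `u, v` of length `r` such that every image `τ(a)`
starts with `u` and ends with `v`. -/
def RProper (τ : Morphism A B) (r : ℕ) : Prop :=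
  ∃ u v : List B, u.length = r ∧ v.length = r ∧ ∀ a, u <+: τ.toFun a ∧ v <:+ τ.toFun a

/-- `τ` is proper, i.e. `1`-proper. -/
protected def Proper (τ : Morphism A B) : Prop := τ.RProper 1

/-- Every letter of `B` occurs in some image `τ(a)`. -/
def LetterOnto (τ : Morphism A B) : Prop := ∀ b : B, ∃ a : A, b ∈ τ.toFun a

/-- Every letter of `B` occurs in every image `τ(a)`. -/
def Positive (τ : Morphism A B) : Prop := ∀ (a : A) (b : B), b ∈ τ.toFun a

/-- Transport a morphism along an equality of alphabets. -/
def castDom {A A' : Type u} {B : Type v} (h : A = A') (τ : Morphism A B) : Morphism A' B :=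
  h ▸ τ

/-- The cut points of the biinfinite concatenation `⋯ τ(x₋₁) . τ(x₀) τ(x₁) ⋯`
(where `τ(x₀)` starts at coordinate `0`). -/
def cut (τ : Morphism A B) (x : ℤ → A) (j : ℤ) : ℤ :=
  if 0 ≤ j then ∑ i ∈ Finset.range j.toNat, ((τ.toFun (x (i : ℤ))).length : ℤ)
  else -∑ i ∈ Finset.range (-j).toNat, ((τ.toFun (x (-(i : ℤ) - 1))).length : ℤ)

/-- The extension of a morphism to biinfinite sequences: `τ(x)` is the biinfinite
concatenation `⋯ τ(x₋₁) . τ(x₀) τ(x₁) ⋯`, with `τ(x₀)` starting at coordinate `0`. -/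
noncomputable def seq (τ : Morphism A B) (x : ℤ → A) : ℤ → B := fun n =>
  letI := Classical.dec (∃ j : ℤ, τ.cut x j ≤ n ∧ n < τ.cut x (j + 1))
  if h : ∃ j : ℤ, τ.cut x j ≤ n ∧ n < τ.cut x (j + 1) then
    (τ.toFun (x h.choose)).getD (n - τ.cut x h.choose).toNat
      ((τ.toFun (x 0)).head (τ.ne (x 0)))
  else (τ.toFun (x 0)).head (τ.ne (x 0))

end Morphism

variable {A B : Type*}

/-- The shift map `T`. -/
def shift (x : ℤ → A) : ℤ → A := fun n => x (n + 1)

/-- The iterate `T^k` of the shift. -/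
def shiftZ (k : ℤ) (x : ℤ → A) : ℤ → A := fun n => x (n + k)

/-- A subshift: a closed shift-invariant set of biinfinite sequences. -/
def IsSubshift [TopologicalSpace A] (X : Set (ℤ → A)) : Prop :=
  IsClosed X ∧ ∀ k : ℤ, shiftZ k '' X = X

/-- Every point of `X` has infinite orbit (no nonzero period). -/
def Aperiodic (X : Set (ℤ → A)) : Prop :=
  ∀ x ∈ X, ∀ k : ℤ, k ≠ 0 → shiftZ k x ≠ x

/-- The shift orbit of a point. -/
def orbit (x : ℤ → A) : Set (ℤ → A) := {y | ∃ k : ℤ, y = shiftZ k x}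

/-- A minimal subshift: every orbit is dense. -/
def IsMinimalSubshift [TopologicalSpace A] (X : Set (ℤ → A)) : Prop :=
  IsSubshift X ∧ X.Nonempty ∧ ∀ x ∈ X, X ⊆ closure (orbit x)

/-- A factor map between subshifts. -/
def IsFactorMap [TopologicalSpace A] [TopologicalSpace B]
    (X : Set (ℤ → A)) (Y : Set (ℤ → B)) (π : (ℤ → A) → (ℤ → B)) : Prop :=
  ContinuousOn π X ∧ π '' X = Y ∧ ∀ x ∈ X, π (shift x) = shift (π x)

/-- A conjugacy: a bijective factor map. -/
def IsConjugacy [TopologicalSpace A] [TopologicalSpace B]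
    (X : Set (ℤ → A)) (Y : Set (ℤ → B)) (π : (ℤ → A) → (ℤ → B)) : Prop :=
  IsFactorMap X Y π ∧ Set.InjOn π X

/-- Two subshifts are conjugate. -/
def Conjugate [TopologicalSpace A] [TopologicalSpace B]
    (X : Set (ℤ → A)) (Y : Set (ℤ → B)) : Prop :=
  ∃ π, IsConjugacy X Y π

/-- `⋃_{k ∈ ℤ} T^k τ(X)`. -/
def morphImage (τ : Morphism A B) (X : Set (ℤ → A)) : Set (ℤ → B) :=
  {y | ∃ k : ℤ, ∃ x ∈ X, y = shiftZ k (τ.seq x)}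

/-- The finite subword `x_{[i, i+m)}` of a biinfinite sequence. -/
def subword (x : ℤ → A) (i : ℤ) (m : ℕ) : List A :=
  (List.range m).map fun t => x (i + (t : ℤ))

/-- A centered `τ`-factorization `(k, x)` of `y` in `X`. -/
def IsCenteredFactorization (τ : Morphism A B) (X : Set (ℤ → A))
    (y : ℤ → B) (k : ℤ) (x : ℤ → A) : Prop :=
  x ∈ X ∧ y = shiftZ k (τ.seq x) ∧ 0 ≤ k ∧ k < ((τ.toFun (x 0)).length : ℤ)

/-- The pair `(X, τ)` is recognizable: every point has at most one centered
`τ`-factorization in `X`. -/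
def Recognizable (X : Set (ℤ → A)) (τ : Morphism A B) : Prop :=
  ∀ y k x k' x', IsCenteredFactorization τ X y k x →
    IsCenteredFactorization τ X y k' x' → k = k' ∧ x = x'

/-- Centered right asymptotic pair. -/
def CenteredRightAsymptotic (x x' : ℤ → A) : Prop :=
  (∀ n : ℤ, 0 < n → x n = x' n) ∧ x 0 ≠ x' 0

/-- Centered left asymptotic pair. -/
def CenteredLeftAsymptotic (x x' : ℤ → A) : Prop :=
  (∀ n : ℤ, n < 0 → x n = x' n) ∧ x 0 ≠ x' 0

/-- Right asymptotic pair. -/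
def RightAsymptotic (x x' : ℤ → A) : Prop :=
  ∃ k : ℤ, CenteredRightAsymptotic (shiftZ k x) (shiftZ k x')

/-- Left asymptotic pair. -/
def LeftAsymptotic (x x' : ℤ → A) : Prop :=
  ∃ k : ℤ, CenteredLeftAsymptotic (shiftZ k x) (shiftZ k x')

/-- A distal factor map: points of a common fiber stay at a distance bounded below along
the orbit (stated for the standard metric `dist(x, y) = 2^{-min{|i| : xᵢ ≠ yᵢ}}`). -/
def IsDistalFactor (X : Set (ℤ → A)) (π : (ℤ → A) → (ℤ → B)) : Prop :=
  ∀ x ∈ X, ∀ x' ∈ X, π x = π x' → x ≠ x' →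
    ∃ m : ℕ, ∀ k : ℤ, ∃ i : ℤ, |i| ≤ (m : ℤ) ∧ x (k + i) ≠ x' (k + i)

/-- `π` is almost `k`-to-`1`: the fibers over a residual subset of `Y` have exactly `k`
elements. -/
def AlmostKto1 [TopologicalSpace A] [TopologicalSpace B]
    (X : Set (ℤ → A)) (Y : Set (ℤ → B)) (π : (ℤ → A) → (ℤ → B)) (k : ℕ) : Prop :=
  ∃ R : Set (ℤ → B), R ⊆ Y ∧ {y : ↥Y | (y : ℤ → B) ∈ R} ∈ residual ↥Y ∧
    ∀ y ∈ R, (X ∩ π ⁻¹' {y}).encard = (k : ℕ∞)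

/-- `π` has radius `r`: it is given by a local code `ψ` of radius `r` on `Y`. -/
def HasRadius {C : Type*} (Y : Set (ℤ → B)) (π : (ℤ → B) → (ℤ → C)) (r : ℕ) : Prop :=
  ∃ ψ : (Fin (2 * r + 1) → B) → C,
    ∀ y ∈ Y, ∀ i : ℤ, π y i = ψ fun t => y (i - (r : ℤ) + ((t : ℕ) : ℤ))

/-- A directive sequence `σ = (σ_n : A_{n+1}⁺ → A_n⁺)_{n ∈ ℕ}` with `A_0 = A0`;
here `alph n` is the alphabet `A_{n+1}`, `mor0 = σ_0` and `mor n = σ_{n+1}`. -/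
structure DirectiveSeq (A0 : Type) where
  alph : ℕ → Type
  fin : ∀ n, Fintype (alph n)
  mor0 : Morphism (alph 0) A0
  mor : ∀ n, Morphism (alph (n + 1)) (alph n)

attribute [instance] DirectiveSeq.fin

namespace DirectiveSeq

variable {A0 B0 : Type}

/-- `σ_{[0, N+1)} : A_{N+1}⁺ → A_0⁺`. -/
def down (S : DirectiveSeq A0) : ∀ N : ℕ, Morphism (S.alph N) A0
  | 0 => S.mor0
  | N + 1 => (S.down N).comp (S.mor N)

/-- `σ_{[n+1, n+N+1)} : A_{n+N+1}⁺ → A_{n+1}⁺`. -/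
def seg (S : DirectiveSeq A0) (n : ℕ) : ∀ N : ℕ, Morphism (S.alph (n + N)) (S.alph n)
  | 0 => Morphism.id _
  | N + 1 => (S.seg n N).comp (S.mor (n + N))

/-- The generated S-adic subshift `X_σ = X_σ^{(0)}`. -/
def X0 (S : DirectiveSeq A0) : Set (ℤ → A0) :=
  {x | ∀ (i : ℤ) (m : ℕ), ∃ (N : ℕ) (a : S.alph N), subword x i m <:+: (S.down N).toFun a}

/-- The level `X_σ^{(n+1)}` of the S-adic subshift. -/
def levelSet (S : DirectiveSeq A0) (n : ℕ) : Set (ℤ → S.alph n) :=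
  {x | ∀ (i : ℤ) (m : ℕ), ∃ (N : ℕ) (a : S.alph (n + (N + 1))),
    subword x i m <:+: (S.seg n (N + 1)).toFun a}

/-- `⟨σ_{[0,N)}⟩ → ∞`. -/
def EverywhereGrowing (S : DirectiveSeq A0) : Prop :=
  ∀ m : ℕ, ∃ N0 : ℕ, ∀ N ≥ N0, ∀ a : S.alph N, m ≤ ((S.down N).toFun a).length

protected def Proper (S : DirectiveSeq A0) : Prop :=
  S.mor0.Proper ∧ ∀ n, (S.mor n).Proper

protected def LetterOnto (S : DirectiveSeq A0) : Prop :=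
  S.mor0.LetterOnto ∧ ∀ n, (S.mor n).LetterOnto

protected def Primitive (S : DirectiveSeq A0) : Prop :=
  (∃ N, (S.down N).Positive) ∧ ∀ n, ∃ N, (S.seg n (N + 1)).Positive

protected def Recognizable (S : DirectiveSeq A0) : Prop :=
  SAdicPaper.Recognizable (S.levelSet 0) S.mor0 ∧
    ∀ n, SAdicPaper.Recognizable (S.levelSet (n + 1)) (S.mor n)

/-- The alphabet rank `AR(σ) = liminf_n #A_n`. -/
noncomputable def rank (S : DirectiveSeq A0) : ℕ∞ :=
  Filter.liminf (fun n => (Fintype.card (S.alph n) : ℕ∞)) Filter.atTop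

/-- The contraction `(σ_{[n_k, n_{k+1})})_{k ∈ ℕ}` of a directive sequence. -/
def contract (S : DirectiveSeq A0) (n : ℕ → ℕ) (hn : StrictMono n) (h0 : n 0 = 0) :
    DirectiveSeq A0 where
  alph k := S.alph (n (k + 1) - 1)
  fin k := S.fin _
  mor0 := S.down (n 1 - 1)
  mor k := Morphism.castDom
    (congrArg S.alph
      (show (n (k + 1) - 1) + (n (k + 2) - n (k + 1)) = n (k + 2) - 1 by
        have h2 := hn (show 0 < k + 1 by omega)
        have h3 : n (k + 1) ≤ n (k + 2) := hn.monotone (by omega)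
        omega))
    (S.seg (n (k + 1) - 1) (n (k + 2) - n (k + 1)))

/-- `T` is a contraction of `S`. -/
def IsContraction (T S : DirectiveSeq A0) : Prop :=
  ∃ (n : ℕ → ℕ) (hn : StrictMono n) (h0 : n 0 = 0), T = S.contract n hn h0

/-- Two directive sequences are equivalent if both are contractions of a common one. -/
def Equivalent (S : DirectiveSeq A0) (T : DirectiveSeq A0) : Prop :=
  ∃ V : DirectiveSeq A0, IsContraction S V ∧ IsContraction T V

end DirectiveSeq

/-- `X` is generated by a proper, primitive and recognizable directive sequence of
alphabet rank at most `K`. -/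
def HasRankRep {A0 : Type} (X : Set (ℤ → A0)) (K : ℕ) : Prop :=
  ∃ S : DirectiveSeq A0, S.X0 = X ∧ S.Proper ∧ S.Primitive ∧ S.Recognizable ∧
    S.rank ≤ (K : ℕ∞)

/-- The topological rank of `X` equals `K`. -/
def TopRankEq {A0 : Type} (X : Set (ℤ → A0)) (K : ℕ) : Prop :=
  HasRankRep X K ∧ ∀ K' : ℕ, HasRankRep X K' → K ≤ K'

/-- A factor `φ : σ → τ` between directive sequences: `φ_0 : A_1⁺ → B_0⁺` (`phi0`) and
`φ_{n+1} : A_{n+1}⁺ → B_{n+1}⁺` (`phi n`), with `φ_0 = τ_0 ∘ φ_1` and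
`φ_n ∘ σ_n = τ_n ∘ φ_{n+1}` for `n ≥ 1`. -/
structure SeqFactor {A0 B0 : Type} (S : DirectiveSeq A0) (T : DirectiveSeq B0) where
  phi0 : Morphism (S.alph 0) B0
  phi : ∀ n, Morphism (S.alph n) (T.alph n)
  comm0 : phi0 = T.mor0.comp (phi 0)
  comm : ∀ n, (phi n).comp (S.mor n) = (T.mor n).comp (phi (n + 1))

namespace SeqFactor

variable {A0 B0 : Type} {S : DirectiveSeq A0} {T : DirectiveSeq B0}

def LetterOnto (F : SeqFactor S T) : Prop :=
  F.phi0.LetterOnto ∧ ∀ n, (F.phi n).LetterOnto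

def Proper (F : SeqFactor S T) : Prop :=
  F.phi0.Proper ∧ ∀ n, (F.phi n).Proper

end SeqFactor

end SAdicPaper

/-!
Induction on `ℓ = ∑ₐ ℓₐ`, for the symmetric hypothesis that `σ_j(u)` and `σ_j(v)` share a
prefix of length `ℓ` (in the theorem, `σ_j(u)` itself, as `|σ_j(u)| ≥ |u| ≥ ℓ`).
Write `u = a u'`, `v = b v'` and say `ℓ_a ≤ ℓ_b`; since `ℓ_b ≤ ℓ`, both `σ_j(a)` and
`σ_j(b)` lie in the common prefix, so `σ_j(b) = σ_j(a) s_j`. If `ℓ_a = ℓ_b`, the letters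
`a` and `b` have equal images and can be identified. Otherwise `σ_j = τ_j ∘ N` for the
Nielsen morphism `N : b ↦ ab` and `τ_j = σ_j[b ↦ s_j]`; the common prefix minus `σ_j(a)` is
a common prefix of `τ_j(N u')` and `τ_j(b N v')`, whose length `ℓ - ℓ_a` is the new total
length, and `N u'` never starts with `b`.
-/

namespace SAdicPaper

namespace Morphism

variable {A B C D : Type*}

theorem ext {τ σ : Morphism A B} (h : τ.toFun = σ.toFun) : τ = σ := by
  cases τ; cases σ; cases h; rfl

@[simp]
theorem word_nil (τ : Morphism A B) : τ.word [] = [] := rfl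

@[simp]
theorem word_cons (τ : Morphism A B) (a : A) (w : List A) :
    τ.word (a :: w) = τ.toFun a ++ τ.word w := rfl

theorem word_singleton (τ : Morphism A B) (a : A) : τ.word [a] = τ.toFun a := by
  simp

theorem word_append (τ : Morphism A B) (w₁ w₂ : List A) :
    τ.word (w₁ ++ w₂) = τ.word w₁ ++ τ.word w₂ := by
  induction w₁ with
  | nil => rfl
  | cons a w ih => simp [ih]

theorem comp_toFun (τ : Morphism B C) (σ : Morphism A B) (a : A) :
    (τ.comp σ).toFun a = τ.word (σ.toFun a) := rfl

theorem comp_word (τ : Morphism B C) (σ : Morphism A B) (w : List A) :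
    (τ.comp σ).word w = τ.word (σ.word w) := by
  induction w with
  | nil => rfl
  | cons a w ih => rw [word_cons, word_cons, word_append, ih, comp_toFun]

theorem comp_assoc (τ : Morphism C D) (σ : Morphism B C) (ρ : Morphism A B) :
    (τ.comp σ).comp ρ = τ.comp (σ.comp ρ) :=
  ext <| funext fun a => comp_word τ σ (ρ.toFun a)

theorem length_le_length_word (τ : Morphism A B) (w : List A) :
    w.length ≤ (τ.word w).length := by
  induction w with
  | nil => simp
  | cons a w ih =>
    have := List.length_pos_iff.mpr (τ.ne a)
    simp only [word_cons, List.length_append, List.length_cons]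
    omega

theorem mem_word {τ : Morphism A B} {w : List A} {a : A} {c : B}
    (ha : a ∈ w) (hc : c ∈ τ.toFun a) : c ∈ τ.word w := by
  induction w with
  | nil => simp at ha
  | cons x w ih =>
    rw [word_cons, List.mem_append]
    rcases List.mem_cons.mp ha with rfl | h
    · exact Or.inl hc
    · exact Or.inr (ih h)

theorem LetterOnto.comp {τ : Morphism B C} {σ : Morphism A B} (hτ : τ.LetterOnto)
    (hσ : σ.LetterOnto) : (τ.comp σ).LetterOnto := fun c =>
  let ⟨b, hb⟩ := hτ c
  let ⟨a, ha⟩ := hσ b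
  ⟨a, mem_word ha hb⟩

def ofFun (f : A → B) : Morphism A B :=
  ⟨fun a => [f a], fun _ => List.cons_ne_nil _ _⟩

theorem letterOnto_ofFun {f : A → B} (hf : Function.Surjective f) : (ofFun f).LetterOnto :=
  fun b => (hf b).imp fun _ ha => by simp [ofFun, ha]

theorem comp_ofFun_toFun (τ : Morphism B C) (f : A → B) (a : A) :
    (τ.comp (ofFun f)).toFun a = τ.toFun (f a) :=
  word_singleton τ (f a)

def restrict (σ : Morphism A B) (p : A → Prop) : Morphism (Subtype p) B :=
  ⟨fun c => σ.toFun c.1, fun c => σ.ne c.1⟩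

def update [DecidableEq A] (σ : Morphism A B) (c : A) (w : List B) (hw : w ≠ []) :
    Morphism A B :=
  ⟨Function.update σ.toFun c w, fun x => by
    rcases eq_or_ne x c with rfl | hx
    · simpa using hw
    · simpa [hx] using σ.ne x⟩

def nielsen [DecidableEq A] (d c : A) : Morphism A A :=
  ⟨fun x => if x = c then [d, c] else [x], fun x => by split <;> simp⟩

theorem letterOnto_nielsen [DecidableEq A] (d c : A) : (nielsen d c).LetterOnto :=
  fun x => ⟨x, by simp only [nielsen]; split <;> simp_all⟩

theorem head?_word_nielsen_ne [DecidableEq A] {d c : A} (hdc : d ≠ c) (w : List A) :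
    ((nielsen d c).word w).head? ≠ some c := by
  rcases w with _ | ⟨x, w⟩
  · simp
  · by_cases hx : x = c <;> simp [nielsen, hx, hdc]

theorem update_comp_nielsen [DecidableEq A] (σ : Morphism A B) {d c : A} (hdc : d ≠ c)
    {s : List B} (hs : s ≠ []) (hc : σ.toFun c = σ.toFun d ++ s) :
    (σ.update c s hs).comp (nielsen d c) = σ := by
  refine ext <| funext fun x => ?_
  rcases eq_or_ne x c with rfl | hx
  · simp [comp_toFun, nielsen, update, hdc, hc]
  · simp [comp_toFun, nielsen, update, hx]

theorem ne_nil_of_prefix_word {τ : Morphism A B} {u : List A} {w : List B}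
    (hw : 0 < w.length) (hpre : w <+: τ.word u) : u ≠ [] := by
  rintro rfl
  simp_all

theorem toFun_prefix_toFun_of_prefix_word {τ : Morphism A B} {a b : A}
    {u v : List A} {w : List B} (hu : w <+: τ.word (a :: u)) (hv : w <+: τ.word (b :: v))
    (hab : (τ.toFun a).length ≤ (τ.toFun b).length) (hb : (τ.toFun b).length ≤ w.length) :
    τ.toFun a <+: τ.toFun b := by
  have hbw : τ.toFun b <+: w := List.prefix_of_prefix_length_le (by simp) hv hb
  have haw : τ.toFun a <+: w := List.prefix_of_prefix_length_le (by simp) hu (hab.trans hb)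
  exact List.prefix_of_prefix_length_le haw hbw hab

theorem prefix_word_update_nielsen [DecidableEq A] (σ : Morphism A B) {a b : A} (hab : a ≠ b)
    {s : List B} (hs : s ≠ []) (hb : σ.toFun b = σ.toFun a ++ s) {u v : List A}
    {w : List B} (hu : w <+: σ.word (a :: u)) (hv : w <+: σ.word (b :: v)) :
    w.drop (σ.toFun a).length <+: (σ.update b s hs).word ((nielsen a b).word u) ∧
      w.drop (σ.toFun a).length <+: (σ.update b s hs).word (b :: (nielsen a b).word v) := by
  have hword : ∀ x, σ.word x = (σ.update b s hs).word ((nielsen a b).word x) := fun x => by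
    rw [← comp_word, update_comp_nielsen σ hab hs hb]
  have hbv : (σ.update b s hs).word (b :: (nielsen a b).word v) = s ++ σ.word v := by
    rw [word_cons, ← hword]
    simp [update]
  have hu' := hu.drop (σ.toFun a).length
  have hv' := hv.drop (σ.toFun a).length
  rw [word_cons, List.drop_left, hword] at hu'
  rw [word_cons, hb, List.append_assoc, List.drop_left, ← hbv] at hv'
  exact ⟨hu', hv'⟩

end Morphism

open Morphism

theorem sum_update_tsub {ι : Type*} [Fintype ι] [DecidableEq ι] (f : ι → ℕ) {b : ι} {c : ℕ}
    (hc : c ≤ f b) :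
    ∑ x, Function.update f b (f b - c) x = ∑ x, f x - c := by
  have h₁ := Finset.sum_update_of_mem (Finset.mem_univ b) f (f b - c)
  have h₂ := Finset.sum_update_of_mem (Finset.mem_univ b) f (f b)
  rw [Function.update_eq_self] at h₂
  omega

section Factorization

variable {A : Type} {J : Type} {B : J → Type}

def SharePrefix (σ : ∀ j, Morphism A (B j)) (n : ℕ) (u v : List A) : Prop :=
  ∀ j, ∃ w, n ≤ w.length ∧ w <+: (σ j).word u ∧ w <+: (σ j).word v

namespace SharePrefix

variable {σ : ∀ j, Morphism A (B j)} {n : ℕ} {u v : List A}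

theorem symm (h : SharePrefix σ n u v) : SharePrefix σ n v u :=
  fun j => (h j).imp fun _ ⟨hn, hu, hv⟩ => ⟨hn, hv, hu⟩

theorem ne_nil [Nonempty J] (h : SharePrefix σ n u v) (hn : 0 < n) : u ≠ [] :=
  let ⟨j⟩ := ‹Nonempty J›
  let ⟨_, hw, hu, _⟩ := h j
  ne_nil_of_prefix_word (hn.trans_le hw) hu

theorem update_nielsen [DecidableEq A] {a b : A} (hab : a ≠ b) {ℓa : ℕ}
    (hla : ∀ j, ((σ j).toFun a).length = ℓa) {s : ∀ j, List (B j)} (hs : ∀ j, s j ≠ [])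
    (hb : ∀ j, (σ j).toFun b = (σ j).toFun a ++ s j)
    (h : SharePrefix σ n (a :: u) (b :: v)) :
    SharePrefix (fun j => (σ j).update b (s j) (hs j)) (n - ℓa)
      ((nielsen a b).word u) (b :: (nielsen a b).word v) := fun j =>
  let ⟨w, hw, hu, hv⟩ := h j
  ⟨w.drop ℓa, by rw [List.length_drop]; omega,
    hla j ▸ prefix_word_update_nielsen (σ j) hab (hs j) (hb j) hu hv⟩

end SharePrefix

variable [Fintype A]

def FactorsThroughSmallerAlphabet (σ : ∀ j, Morphism A (B j)) : Prop :=
  ∃ (C : Type) (instC : Fintype C), @Fintype.card C instC < Fintype.card A ∧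
    ∃ q : Morphism A C, q.LetterOnto ∧
      ∃ p : ∀ j, Morphism C (B j), (∀ j, σ j = (p j).comp q) ∧
        ∃ M : C → ℕ, ∀ j c, ((p j).toFun c).length = M c

theorem FactorsThroughSmallerAlphabet.of_comp {σ τ : ∀ j, Morphism A (B j)}
    {ρ : Morphism A A} (hρ : ρ.LetterOnto) (hστ : ∀ j, σ j = (τ j).comp ρ)
    (hτ : FactorsThroughSmallerAlphabet τ) : FactorsThroughSmallerAlphabet σ := by
  obtain ⟨C, instC, hcard, q, hq, p, hpq, M, hM⟩ := hτ
  exact ⟨C, instC, hcard, q.comp ρ, hq.comp hρ, p,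
    fun j => by rw [hστ j, hpq j, comp_assoc], M, hM⟩

theorem factorsThroughSmallerAlphabet_of_toFun_eq {σ : ∀ j, Morphism A (B j)} {ℓ : A → ℕ}
    (hlen : ∀ j a, ((σ j).toFun a).length = ℓ a) {a b : A} (hab : a ≠ b)
    (heq : ∀ j, (σ j).toFun a = (σ j).toFun b) : FactorsThroughSmallerAlphabet σ := by
  classical
  let f : A → {x // x ≠ b} := fun x => if h : x = b then ⟨a, hab⟩ else ⟨x, h⟩
  have hf : Function.Surjective f := fun y => ⟨y.1, dif_neg y.2⟩
  refine ⟨{x // x ≠ b}, inferInstance, Fintype.card_subtype_lt (not_not.mpr rfl),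
    ofFun f, letterOnto_ofFun hf, fun j => (σ j).restrict (· ≠ b), fun j => ?_,
    fun c => ℓ c.1, fun j c => hlen j c.1⟩
  refine ext <| funext fun x => ?_
  rw [comp_ofFun_toFun]
  rcases eq_or_ne x b with rfl | hx
  · simp [f, restrict, heq]
  · simp [f, restrict, hx]

theorem factorsThroughSmallerAlphabet_of_sharePrefix [Nonempty A] [Nonempty J]
    (σ : ∀ j, Morphism A (B j)) (ℓ : A → ℕ) (hlen : ∀ j a, ((σ j).toFun a).length = ℓ a)
    (u v : List A) (hhead : u.head? ≠ v.head?) (hw : SharePrefix σ (∑ x, ℓ x) u v) :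
    FactorsThroughSmallerAlphabet σ := by
  classical
  induction hL : ∑ x, ℓ x using Nat.strong_induction_on generalizing σ ℓ u v with
  | _ L ih =>
  rw [hL] at hw
  obtain ⟨j₀⟩ := ‹Nonempty J›
  have hpos : ∀ x, 0 < ℓ x := fun x => hlen j₀ x ▸ List.length_pos_iff.mpr ((σ j₀).ne x)
  have hle : ∀ x, ℓ x ≤ L := fun x => hL ▸ Finset.single_le_sum (by simp) (Finset.mem_univ x)
  have hLpos : 0 < L := (hpos (Classical.arbitrary A)).trans_le (hle _)
  obtain ⟨a, u, rfl⟩ := List.exists_cons_of_ne_nil (hw.ne_nil hLpos)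
  obtain ⟨b, v, rfl⟩ := List.exists_cons_of_ne_nil (hw.symm.ne_nil hLpos)
  have hab : a ≠ b := by simpa using hhead
  wlog hℓ : ℓ a ≤ ℓ b generalizing a b u v
  · exact this b v a u hhead.symm hw.symm hab.symm (le_of_not_ge hℓ)
  have hpre : ∀ j, (σ j).toFun a <+: (σ j).toFun b := fun j =>
    let ⟨_, hwL, hwu, hwv⟩ := hw j
    toFun_prefix_toFun_of_prefix_word hwu hwv (by rw [hlen, hlen]; exact hℓ)
      (by rw [hlen]; exact (hle b).trans hwL)
  rcases hℓ.lt_or_eq with hlt | heq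
  · choose s hs using hpre
    have hslen : ∀ j, (s j).length = ℓ b - ℓ a := fun j => by
      have := congrArg List.length (hs j)
      simp only [List.length_append, hlen] at this
      omega
    have hsne : ∀ j, s j ≠ [] := fun j => List.ne_nil_of_length_pos (by rw [hslen]; omega)
    let ℓ' := Function.update ℓ b (ℓ b - ℓ a)
    have hlen' : ∀ j x, (((σ j).update b (s j) (hsne j)).toFun x).length = ℓ' x := fun j x => by
      rcases eq_or_ne x b with rfl | hx
      · simp [ℓ', update, hslen]
      · simp [ℓ', update, hx, hlen]
    have hL' : ∑ x, ℓ' x = L - ℓ a := hL ▸ sum_update_tsub ℓ hlt.le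
    have hhead' : ((nielsen a b).word u).head? ≠ (b :: (nielsen a b).word v).head? := by
      simpa using head?_word_nielsen_ne hab u
    exact .of_comp (letterOnto_nielsen a b)
      (fun j => (update_comp_nielsen (σ j) hab (hsne j) (hs j).symm).symm)
      (ih (L - ℓ a) (by have := hpos a; omega) _ ℓ' hlen' _ _ hhead'
        (hL' ▸ hw.update_nielsen hab (hlen · a) hsne fun j => (hs j).symm) hL')
  · exact factorsThroughSmallerAlphabet_of_toFun_eq hlen hab fun j =>
      (hpre j).eq_of_length (by rw [hlen, hlen, heq])

end Factorization

/-- if the morphisms `σ_j : A⁺ → B_j⁺` have `j`-independent letter image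
lengths `ℓ_a`, and `σ_j(u)` is a prefix of `σ_j(v)` for all `j`, where `|u| ≥ ∑_a ℓ_a`
and `u, v` start with different letters, then the `σ_j` factor through a common
letter-onto morphism `q : A⁺ → C⁺` with `#C < #A`, with `j`-independent lengths. -/
theorem statement10 {A : Type} [Fintype A] {J : Type} (B : J → Type)
    (σ : ∀ j, Morphism A (B j)) (ℓ : A → ℕ)
    (hlen : ∀ j a, ((σ j).toFun a).length = ℓ a)
    (u v : List A) (hu : u ≠ []) (hv : v ≠ [])
    (hul : (∑ a, ℓ a) ≤ u.length)
    (hhead : u.head? ≠ v.head?)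
    (hpre : ∀ j, (σ j).word u <+: (σ j).word v) :
    ∃ (C : Type) (instC : Fintype C), @Fintype.card C instC < Fintype.card A ∧
      ∃ q : Morphism A C, q.LetterOnto ∧
        ∃ p : ∀ j, Morphism C (B j), (∀ j, σ j = (p j).comp q) ∧
          ∃ M : C → ℕ, ∀ j c, ((p j).toFun c).length = M c := by
  obtain ⟨a, u', rfl⟩ := List.exists_cons_of_ne_nil hu
  obtain ⟨b, v', rfl⟩ := List.exists_cons_of_ne_nil hv
  have hab : a ≠ b := by simpa using hhead
  rcases isEmpty_or_nonempty J with _ | _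
  · exact factorsThroughSmallerAlphabet_of_toFun_eq hlen hab isEmptyElim
  · have : Nonempty A := ⟨a⟩
    exact factorsThroughSmallerAlphabet_of_sharePrefix σ ℓ hlen _ _ hhead fun j =>
      ⟨_, hul.trans (length_le_length_word _ _), List.prefix_refl _, hpre j⟩

end SAdicPaper
end

section
/- Let π: (X,T) → (Y,T) be a factor map between minimal subshifts. Then either π is distal, or there exists y ∈ Y such that the fiber π^{-1}(y) contains two distinct points forming a right asymptotic or left asymptotic pair. -/
/-! If `x ≠ x'` lie in a common fiber and are not separated along their orbit, then either
their differences are bounded above, which makes `(x, x')` itself right asymptotic, or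
there are differences `d` preceded by arbitrarily long stretches of agreement. In the latter
case the pairs `(T^d x, T^d x')` all lie in the compact set of pairs with a common image,
and any limit point of them is a centered left asymptotic pair. -/

namespace SAdicPaper

open Set

section Shift

variable {A : Type*}

theorem shiftZ_shiftZ (a b : ℤ) (x : ℤ → A) : shiftZ a (shiftZ b x) = shiftZ (a + b) x := by
  funext n
  simp only [shiftZ, add_assoc]

@[simp]
theorem shiftZ_zero (x : ℤ → A) : shiftZ 0 x = x := by
  funext n
  simp [shiftZ]

theorem IsSubshift.shiftZ_mem [TopologicalSpace A] {X : Set (ℤ → A)} (hX : IsSubshift X)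
    (k : ℤ) {x : ℤ → A} (hx : x ∈ X) : shiftZ k x ∈ X :=
  hX.2 k ▸ mem_image_of_mem _ hx

theorem IsFactorMap.map_shiftZ {B : Type*} [TopologicalSpace A] [TopologicalSpace B]
    {X : Set (ℤ → A)} {Y : Set (ℤ → B)} {π : (ℤ → A) → (ℤ → B)} (hπ : IsFactorMap X Y π)
    (hX : IsSubshift X) {x : ℤ → A} (hx : x ∈ X) (k : ℤ) :
    π (shiftZ k x) = shiftZ k (π x) := by
  have hstep : ∀ k : ℤ, π (shiftZ (1 + k) x) = shiftZ 1 (π (shiftZ k x)) := fun k => by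
    rw [← shiftZ_shiftZ]
    exact hπ.2.2 _ (hX.shiftZ_mem k hx)
  induction k using Int.induction_on with
  | zero => simp
  | succ i ih => rw [add_comm (i : ℤ) 1, hstep, ih, shiftZ_shiftZ]
  | pred i ih =>
    have h := hstep (-i - 1)
    rw [show 1 + (-(i : ℤ) - 1) = -i by ring, ih] at h
    calc π (shiftZ (-i - 1) x) = shiftZ (-1) (shiftZ 1 (π (shiftZ (-i - 1) x))) := by
          rw [shiftZ_shiftZ]; simp
      _ = shiftZ (-i - 1) (π x) := by rw [← h, shiftZ_shiftZ]; ring_nf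

end Shift

section Asymptotic

variable {A : Type*} {x x' : ℤ → A}

theorem rightAsymptotic_of_eqOn_Ioi (hne : x ≠ x') {b : ℤ} (hb : EqOn x x' (Ioi b)) :
    RightAsymptotic x x' := by
  obtain ⟨d, hd, hmax⟩ := Int.exists_greatest_of_bdd (P := fun n => x n ≠ x' n)
    ⟨b, fun n hn => not_lt.1 fun hbn => hn (hb hbn)⟩ (Function.ne_iff.1 hne)
  refine ⟨d, fun n hn => ?_, by simpa [shiftZ] using hd⟩
  by_contra h
  have := hmax _ h
  omega

theorem exists_shiftZ_ne_and_eqOn_Ico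
    (hprox : ∀ m : ℕ, ∃ k : ℤ, ∀ i : ℤ, |i| ≤ m → x (k + i) = x' (k + i))
    (hunb : ∀ b : ℤ, ∃ n, b < n ∧ x n ≠ x' n) (m : ℕ) :
    ∃ d : ℤ, shiftZ d x 0 ≠ shiftZ d x' 0 ∧
      EqOn (shiftZ d x) (shiftZ d x') (Ico (-(m : ℤ)) 0) := by
  obtain ⟨k, hk⟩ := hprox m
  obtain ⟨d, ⟨hkd, hd⟩, hmin⟩ := Int.exists_least_of_bdd
    (P := fun n => k < n ∧ x n ≠ x' n) ⟨k, fun n hn => hn.1.le⟩ (hunb k)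
  refine ⟨d, by simpa [shiftZ] using hd, fun n ⟨hmn, hn0⟩ => ?_⟩
  simp only [shiftZ]
  by_cases hnk : n + d ≤ k
  · simpa using hk (n + d - k) (abs_le.2 ⟨by omega, by omega⟩)
  · by_contra h
    have := hmin (n + d) ⟨by omega, h⟩
    omega

end Asymptotic

theorem isCompact_setOf_map_eq {α β : Type*} [TopologicalSpace α] [T2Space α]
    [TopologicalSpace β] [T2Space β] {X : Set α} (hX : IsCompact X) {π : α → β}
    (hπ : ContinuousOn π X) : IsCompact {q ∈ X ×ˢ X | π q.1 = π q.2} := by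
  have hcont : ContinuousOn (fun q : α × α => (π q.1, π q.2)) (X ×ˢ X) :=
    (hπ.comp continuousOn_fst fun _ hq => hq.1).prodMk
      (hπ.comp continuousOn_snd fun _ hq => hq.2)
  exact (hX.prod hX).of_isClosed_subset
    (hcont.preimage_isClosed_of_isClosed (hX.isClosed.prod hX.isClosed) isClosed_diagonal)
    fun _ hq => hq.1

theorem exists_centeredLeftAsymptotic_of_eqOn_Ico {A : Type*} [TopologicalSpace A]
    [DiscreteTopology A] {K : Set ((ℤ → A) × (ℤ → A))} (hK : IsCompact K)
    (h : ∀ m : ℕ, ∃ q ∈ K, q.1 0 ≠ q.2 0 ∧ EqOn q.1 q.2 (Ico (-(m : ℤ)) 0)) :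
    ∃ q ∈ K, CenteredLeftAsymptotic q.1 q.2 := by
  set W : ℕ → Set ((ℤ → A) × (ℤ → A)) :=
    fun m => K ∩ {q | q.1 0 ≠ q.2 0} ∩ ⋂ n ∈ Ico (-(m : ℤ)) 0, {q | q.1 n = q.2 n}
  have hW_closed : ∀ m, IsClosed (W m) := fun m =>
    (hK.isClosed.inter ((isClosed_discrete {p : A × A | p.1 ≠ p.2}).preimage
      (by fun_prop : Continuous fun q : (ℤ → A) × (ℤ → A) => (q.1 0, q.2 0)))).inter
      (isClosed_biInter fun n _ => isClosed_eq (by fun_prop) (by fun_prop))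
  have hW_anti : ∀ m, W (m + 1) ⊆ W m := fun m q ⟨hq, hqn⟩ =>
    ⟨hq, mem_iInter₂.2 fun n hn => mem_iInter₂.1 hqn n ⟨by have := hn.1; push_cast; omega, hn.2⟩⟩
  have hW_ne : ∀ m, (W m).Nonempty := fun m => by
    obtain ⟨q, hqK, hq0, hqm⟩ := h m
    exact ⟨q, ⟨hqK, hq0⟩, mem_iInter₂.2 hqm⟩
  obtain ⟨q, hq⟩ := IsCompact.nonempty_iInter_of_sequence_nonempty_isCompact_isClosed W
    hW_anti hW_ne (hK.of_isClosed_subset (hW_closed 0) fun _ hq => hq.1.1) hW_closed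
  have hqW := mem_iInter.1 hq
  refine ⟨q, (hqW 0).1.1, fun n hn => ?_, (hqW 0).1.2⟩
  exact mem_iInter₂.1 (hqW n.natAbs).2 n ⟨by omega, hn⟩

theorem statement18_general {A B : Type} [Fintype A] [TopologicalSpace A] [DiscreteTopology A]
    [TopologicalSpace B] [DiscreteTopology B]
    (X : Set (ℤ → A)) (Y : Set (ℤ → B))
    (hX : IsMinimalSubshift X)
    (π : (ℤ → A) → (ℤ → B)) (hπ : IsFactorMap X Y π) :
    IsDistalFactor X π ∨
      ∃ y ∈ Y, ∃ x ∈ X, ∃ x' ∈ X, π x = y ∧ π x' = y ∧ x ≠ x' ∧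
        (RightAsymptotic x x' ∨ LeftAsymptotic x x') := by
  refine or_iff_not_imp_left.2 fun hnd => ?_
  obtain ⟨x, hx, x', hx', hxx', hne, hprox⟩ : ∃ x ∈ X, ∃ x' ∈ X, π x = π x' ∧ x ≠ x' ∧
      ∀ m : ℕ, ∃ k : ℤ, ∀ i : ℤ, |i| ≤ m → x (k + i) = x' (k + i) := by
    simpa [IsDistalFactor] using hnd
  have hmemY : ∀ z ∈ X, π z ∈ Y := fun z hz => hπ.2.1 ▸ mem_image_of_mem π hz
  by_cases hbdd : ∃ b, EqOn x x' (Ioi b)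
  · obtain ⟨b, hb⟩ := hbdd
    exact ⟨π x, hmemY x hx, x, hx, x', hx', rfl, hxx'.symm, hne,
      .inl (rightAsymptotic_of_eqOn_Ioi hne hb)⟩
  have hunb : ∀ b : ℤ, ∃ n, b < n ∧ x n ≠ x' n := by
    simpa [EqOn] using hbdd
  obtain ⟨q, ⟨⟨hq₁, hq₂⟩, hπq⟩, hq⟩ := exists_centeredLeftAsymptotic_of_eqOn_Ico
    (isCompact_setOf_map_eq hX.1.1.isCompact hπ.1) fun m => by
      obtain ⟨d, hd⟩ := exists_shiftZ_ne_and_eqOn_Ico hprox hunb m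
      refine ⟨(shiftZ d x, shiftZ d x'), ⟨⟨hX.1.shiftZ_mem d hx, hX.1.shiftZ_mem d hx'⟩, ?_⟩, hd⟩
      simp only [hπ.map_shiftZ hX.1 hx, hπ.map_shiftZ hX.1 hx', hxx']
  exact ⟨π q.1, hmemY _ hq₁, q.1, hq₁, q.2, hq₂, rfl, hπq.symm,
    fun h => hq.2 (congrFun h 0), .inr ⟨0, by simpa using hq⟩⟩

/-- a factor map between minimal subshifts is either distal or some fiber
contains two distinct points forming a right or left asymptotic pair. -/
theorem statement18 {A B : Type} [Fintype A] [TopologicalSpace A] [DiscreteTopology A]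
    [Fintype B] [TopologicalSpace B] [DiscreteTopology B]
    (X : Set (ℤ → A)) (Y : Set (ℤ → B))
    (hX : IsMinimalSubshift X) (hY : IsMinimalSubshift Y)
    (π : (ℤ → A) → (ℤ → B)) (hπ : IsFactorMap X Y π) :
    IsDistalFactor X π ∨
      ∃ y ∈ Y, ∃ x ∈ X, ∃ x' ∈ X, π x = y ∧ π x' = y ∧ x ≠ x' ∧
        (RightAsymptotic x x' ∨ LeftAsymptotic x x') :=
  statement18_general X Y hX π hπ

end SAdicPaper
end
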